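/- arXiv:1206.0326 — 2 statements merged into one kernel-verified Lean document; each statement's English description precedes it below -/
import Mathlib

section
/- Let S be a commutative semigroup with zero, p a prime, and X a finite subset of S such that the p-th power map is one-to-one on X and takes no nonzero element of X to 0. Then for 1 ≤ i ≤ p, card(X^i \ {0}) ≥ card(X \ {0}), where X^i is the set of all i-fold products of elements of X. -/
open Pointwise

/-- `pw x n` is the `n`-th power of `x` in any magma, for `n ≥ 1`
(with the junk value `pw x 0 = x`). -/
def pw {R : Type*} [Mul R] (x : R) : ℕ → R
  | 0 => x
  | 1 => x
  | n + 2 => x * pw x (n + 1)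

/-!
Adjoin a unit to `S` and let `A` be the image of `X \ {0}`. Over `𝔽_p`, consider the generic
element `v = ∑_{a ∈ A} X_a · a` of the monoid algebra with coefficients in `𝔽_p[X_a : a ∈ A]`.
By the Frobenius, `v ^ p = ∑ X_a ^ p · a ^ p`, and as `a ↦ a ^ p` is injective on `A`,
`X_a ^ p` is the coefficient of `a ^ p` in `v ^ i * v ^ (p - i)`. That coefficient lies in the
ideal generated by the coefficients of `v ^ i` at those `s ∈ A ^ i` dividing some `a ^ p`,
and such `s` are nonzero elements of `X ^ i`. So the variables lie in the radical of an ideal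
generated by at most `|X ^ i \ {0}|` polynomials without constant term. The ideal of the
variables has height `|A|`, so Krull's height theorem gives `|A| ≤ |X ^ i \ {0}|`.
-/

theorem pw_eq_pow {M : Type*} [Monoid M] (x : M) : ∀ {n : ℕ}, n ≠ 0 → pw x n = x ^ n
  | 1, _ => (pow_one x).symm
  | n + 2, _ => by rw [pw, pw_eq_pow x n.succ_ne_zero, ← pow_succ']

theorem map_pw {M N : Type*} [Mul M] [Mul N] (f : M →ₙ* N) (x : M) :
    ∀ n, f (pw x n) = pw (f x) n
  | 0 | 1 => rfl
  | n + 2 => by rw [pw, pw, map_mul, map_pw f x (n + 1)]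

theorem Set.image_pw {M N : Type*} [Mul M] [Mul N] (f : M →ₙ* N) (X : Set M) :
    ∀ n, f '' pw X n = pw (f '' X) n
  | 0 | 1 => rfl
  | n + 2 => by rw [pw, pw, Set.image_mul, Set.image_pw f X (n + 1)]

theorem Set.Finite.pw {M : Type*} [Mul M] {X : Set M} (hX : X.Finite) :
    ∀ n, (_root_.pw X n).Finite
  | 0 | 1 => hX
  | n + 2 => hX.mul (hX.pw (n + 1))

theorem WithOne.coe_zero_mul {S : Type*} [SemigroupWithZero S] (b : WithOne S) :
    ((0 : S) : WithOne S) * b = (0 : S) := by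
  cases b with
  | one => exact mul_one _
  | coe b => exact congrArg _ (zero_mul b)

theorem Ideal.height_radical {R : Type*} [CommRing R] (I : Ideal R) :
    I.radical.height = I.height := by
  simp only [Ideal.height, Ideal.radical_minimalPrimes]

namespace MvPolynomial

variable {R ι : Type*} [CommRing R]

section SetVarsZero

variable [DecidableEq ι]

variable (R) in
noncomputable def setVarsZero (s : Finset ι) : MvPolynomial ι R →ₐ[R] MvPolynomial ι R :=
  aeval (s.piecewise 0 X)

theorem setVarsZero_comp {s t : Finset ι} (hst : s ⊆ t) :
    (setVarsZero R t).comp (setVarsZero R s) = setVarsZero R t := by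
  ext k : 1
  by_cases hk : k ∈ s
  · simp [setVarsZero, hk, hst hk]
  · simp [setVarsZero, hk]

theorem ker_setVarsZero_lt_insert [Nontrivial R] {s : Finset ι} {j : ι} (hj : j ∉ s) :
    RingHom.ker (setVarsZero R s) < RingHom.ker (setVarsZero R (insert j s)) := by
  refine lt_of_le_of_ne (fun f hf => ?_) fun h => ?_
  · rw [RingHom.mem_ker] at hf ⊢
    rw [← setVarsZero_comp (Finset.subset_insert j s), AlgHom.comp_apply, hf, map_zero]
  · have hXj : X j ∈ RingHom.ker (setVarsZero R (insert j s)) := by simp [setVarsZero]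
    rw [← h] at hXj
    simp [setVarsZero, hj, X_ne_zero] at hXj

theorem card_le_height_ker_setVarsZero [IsDomain R] (s : Finset ι) :
    (s.card : ℕ∞) ≤ (RingHom.ker (setVarsZero R s)).height := by
  induction s using Finset.induction_on with
  | empty => simp
  | insert j s hj ih =>
    have := RingHom.ker_isPrime (setVarsZero R s)
    have := RingHom.ker_isPrime (setVarsZero R (insert j s))
    rw [Finset.card_insert_of_notMem hj, Nat.cast_succ]
    exact le_trans (by gcongr) (Ideal.height_add_one_le_of_lt_of_isPrime
      (ker_setVarsZero_lt_insert hj))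

theorem ker_setVarsZero_univ_le_span_range_X [Fintype ι] :
    RingHom.ker (setVarsZero R (Finset.univ : Finset ι)) ≤ Ideal.span (Set.range X) := by
  intro f hf
  rw [RingHom.mem_ker, setVarsZero, Finset.piecewise_univ, aeval_zero] at hf
  rw [← Set.image_univ, mem_ideal_span_X_image]
  intro m hm
  by_contra! hm0
  obtain rfl : m = 0 := Finsupp.ext fun i => hm0 i (Set.mem_univ i)
  simp_all [mem_support_iff, ← constantCoeff_eq]

end SetVarsZero

theorem card_le_card_of_X_mem_radical [IsDomain R] [IsNoetherianRing R] [Fintype ι]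
    {T : Finset (MvPolynomial ι R)} (hT : ∀ t ∈ T, constantCoeff t = 0)
    (hX : ∀ x, X x ∈ (Ideal.span (T : Set (MvPolynomial ι R))).radical) :
    Fintype.card ι ≤ T.card := by
  classical
  set I := Ideal.span (T : Set (MvPolynomial ι R))
  have hI : I ≠ ⊤ := ne_top_of_le_ne_top (RingHom.ker_ne_top constantCoeff)
    (Ideal.span_le.2 fun t ht => hT t ht)
  suffices (Fintype.card ι : ℕ∞) ≤ T.card by exact_mod_cast this
  calc (Fintype.card ι : ℕ∞) = (Finset.univ : Finset ι).card := rfl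
    _ ≤ (RingHom.ker (setVarsZero R (Finset.univ : Finset ι))).height :=
      card_le_height_ker_setVarsZero _
    _ ≤ I.radical.height := Ideal.height_mono <| ker_setVarsZero_univ_le_span_range_X.trans
      (Ideal.span_le.2 (Set.range_subset_iff.2 hX))
    _ = I.height := I.height_radical
    _ ≤ I.spanFinrank := I.height_le_spanFinrank hI
    _ ≤ T.card := by
      simpa using Submodule.spanFinrank_span_le_ncard_of_finite (R := MvPolynomial ι R)
        T.finite_toSet

end MvPolynomial

namespace MonoidAlgebra

variable {k G : Type*}

theorem support_coeff_pow_subset [Semiring k] [Monoid G] [DecidableEq G] (x : k[G]) (n : ℕ) :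
    (x ^ n).coeff.support ⊆ x.coeff.support ^ n := by
  induction n with
  | zero => simpa using support_coeff_one_subset
  | succ n ih =>
    rw [pow_succ, pow_succ]
    exact (support_coeff_mul_subset _ _).trans (Finset.mul_subset_mul_right ih)

theorem sum_single_pow_char [CommSemiring k] [CommMonoid G] (p : ℕ) [ExpChar k[G] p]
    {ι : Type*} (s : Finset ι) (g : ι → G) (r : ι → k) :
    (∑ a ∈ s, single (g a) (r a)) ^ p = ∑ a ∈ s, single (g a ^ p) (r a ^ p) := by
  simp only [sum_pow_char, single_pow]

end MonoidAlgebra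

open MonoidAlgebra MvPolynomial in
theorem card_le_card_filter_mul_eq_pow {M : Type*} [CommMonoid M] [DecidableEq M] {p : ℕ}
    [Fact p.Prime] {A : Finset M} (hA : Set.InjOn (· ^ p) (A : Set M)) {i : ℕ} (hi : 1 ≤ i)
    (hip : i ≤ p) :
    A.card ≤ ((A ^ i).filter fun s => ∃ a ∈ A, ∃ b ∈ A ^ (p - i), s * b = a ^ p).card := by
  set F := (A ^ i).filter fun s => ∃ a ∈ A, ∃ b ∈ A ^ (p - i), s * b = a ^ p
  have : CharP (MvPolynomial A (ZMod p))[M] p := charP_of_injective_algebraMap' (ZMod p) p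
  let v : (MvPolynomial A (ZMod p))[M] := ∑ a : A, single (a : M) (X a)
  have hsupp : ∀ n, (v ^ n).coeff.support ⊆ A ^ n := by
    have hv : v.coeff.support ⊆ A := by
      rw [MonoidAlgebra.coeff_sum]
      exact Finsupp.support_finsetSum.trans <| Finset.biUnion_subset.2 fun a _ =>
        Finsupp.support_single_subset.trans (by simp)
    exact fun n => (support_coeff_pow_subset v n).trans (Finset.pow_subset_pow_left hv)
  have hconst : ∀ s, constantCoeff ((v ^ i).coeff s) = 0 := by
    have hv0 : mapRingHom M constantCoeff v = 0 := by simp [v]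
    intro s
    rw [← coeff_mapRingHom, map_pow, hv0, zero_pow (by omega), MonoidAlgebra.coeff_zero,
      Finsupp.coe_zero, Pi.zero_apply]
  have hpow : ∀ a : A, X a ^ p = (v ^ p).coeff (a ^ p) := by
    intro a
    rw [sum_single_pow_char, MonoidAlgebra.coeff_sum, Finsupp.finsetSum_apply,
      Finset.sum_eq_single a]
    · simp
    · intro b _ hba
      rw [coeff_single, Finsupp.single_apply, if_neg]
      exact fun h => hba (Subtype.ext (hA b.2 a.2 h))
    · simp
  set T := F.image fun s => (v ^ i).coeff s
  have hT : ∀ a : A, X a ^ p ∈ Ideal.span (T : Set (MvPolynomial A (ZMod p))) := by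
    intro a
    rw [hpow a, ← pow_mul_pow_sub v hip, MonoidAlgebra.coeff_mul]
    refine Ideal.sum_mem _ fun s hs => Ideal.sum_mem _ fun b hb => ?_
    dsimp only
    split_ifs with hsb
    · refine Ideal.mul_mem_right _ _ (Ideal.subset_span (Finset.mem_coe.2 ?_))
      exact Finset.mem_image_of_mem _
        (Finset.mem_filter.2 ⟨hsupp i hs, a, a.2, b, hsupp _ hb, hsb⟩)
    · exact Ideal.zero_mem _
  calc A.card = Fintype.card A := (Fintype.card_coe A).symm
    _ ≤ T.card := card_le_card_of_X_mem_radical (by simp [T, hconst]) fun a => ⟨p, hT a⟩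
    _ ≤ F.card := Finset.card_image_le

theorem stmt_12 {S : Type*} [SemigroupWithZero S] (hcomm : ∀ a b : S, a * b = b * a)
    (p : ℕ) (hp : p.Prime) (X : Set S) (hX : X.Finite)
    (hinj : Set.InjOn (fun x => pw x p) X)
    (hnz : ∀ x ∈ X, x ≠ 0 → pw x p ≠ 0) :
    ∀ i, 1 ≤ i → i ≤ p → (X \ {0}).ncard ≤ (pw X i \ {0}).ncard := by
  intro i hi hip
  let _ : CommSemigroup S := { ‹SemigroupWithZero S› with mul_comm := hcomm }
  have _ : Fact p.Prime := ⟨hp⟩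
  classical
  let ι : S →ₙ* WithOne S := WithOne.coeMulHom
  have hι_pow : ∀ x : S, ι x ^ p = ι (pw x p) := fun x => by
    rw [map_pw, pw_eq_pow _ hp.ne_zero]
  have hι_image : ∀ {n}, n ≠ 0 → (ι '' X) ^ n = ι '' pw X n := fun hn => by
    rw [Set.image_pw, pw_eq_pow _ hn]
  set A := ((hX.sdiff (t := {0})).image ι).toFinset
  have hAι : (A : Set (WithOne S)) = ι '' (X \ {0}) := Set.Finite.coe_toFinset _
  have hA : Set.InjOn (· ^ p) (A : Set (WithOne S)) := by
    rw [hAι]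
    rintro _ ⟨x, hx, rfl⟩ _ ⟨y, hy, rfl⟩ hxy
    simp only [hι_pow] at hxy
    exact congrArg ι (hinj hx.1 hy.1 (WithOne.coe_injective hxy))
  set F := (A ^ i).filter fun s => ∃ a ∈ A, ∃ b ∈ A ^ (p - i), s * b = a ^ p
  have hF : (F : Set (WithOne S)) ⊆ ι '' (pw X i \ {0}) := by
    intro s hs
    obtain ⟨hsA, a, ha, b, -, hsb⟩ := Finset.mem_filter.1 hs
    have hsX : s ∈ ι '' pw X i := by
      rw [← hι_image (by omega)]
      refine Set.pow_subset_pow_left ?_ (Finset.coe_pow A i ▸ Finset.mem_coe.2 hsA)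
      exact hAι ▸ Set.image_mono Set.sdiff_subset
    obtain ⟨σ, hσ, rfl⟩ := hsX
    obtain ⟨x, hx, rfl⟩ : a ∈ ι '' (X \ {0}) := hAι ▸ Finset.mem_coe.2 ha
    refine ⟨σ, ⟨hσ, fun hσ0 => hnz x hx.1 hx.2 (WithOne.coe_injective ?_)⟩, rfl⟩
    change ι (pw x p) = ι 0
    rw [← hι_pow, ← hsb, Set.mem_singleton_iff.1 hσ0]
    exact WithOne.coe_zero_mul b
  calc (X \ {0}).ncard = (ι '' (X \ {0})).ncard :=
        (Set.ncard_image_of_injective _ WithOne.coe_injective).symm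
    _ = A.card := Set.ncard_eq_toFinset_card _ _
    _ ≤ F.card := card_le_card_filter_mul_eq_pow hA hi hip
    _ = (F : Set (WithOne S)).ncard := (Set.ncard_coe_finset F).symm
    _ ≤ (ι '' (pw X i \ {0})).ncard := Set.ncard_le_ncard hF ((hX.pw i).sdiff.image ι)
    _ = (pw X i \ {0}).ncard := Set.ncard_image_of_injective _ WithOne.coe_injective
end

section
/- Let F be a field of characteristic 0 or characteristic not dividing n, let N ≥ n, and let R = [F][x]/(x^{N+1}) be the nonunital truncated polynomial algebra (spanned by x, x^2, ..., x^N). If U is an F-subspace of R all of whose nonzero elements have nonzero n-th power, or all of whose elements are n-th powers in R, then dim U ≤ N/n. -/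
open Pointwise

/-!
Let `powFiltration F x k` be the span of the `x^j` with `j ≥ k`; it is multiplicative, so if
the lowest term of `r ≠ 0` is `c x^m`, the lowest term of `r^n` is `c^n x^(nm)`, and `r^n ≠ 0`
forces `nm ≤ N`. Hence every nonzero `u ∈ U` has a nonzero coordinate in a fixed set of `N / n`
basis indices: its lowest degree `m`, with `nm ≤ N`, if `u^n ≠ 0`; the degree `nm` of `r^n` if
`u = r^n`. Projecting onto those coordinates embeds `U`.
-/

open Finset

section Pw

variable {R : Type*}

lemma pw_one [Mul R] (x : R) : pw x 1 = x := rfl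

lemma pw_succ [Mul R] (x : R) {k : ℕ} (hk : 1 ≤ k) : pw x (k + 1) = x * pw x k := by
  obtain ⟨k, rfl⟩ := Nat.exists_eq_add_of_le' hk
  rfl

lemma pw_add [Semigroup R] (x : R) {a b : ℕ} (ha : 1 ≤ a) (hb : 1 ≤ b) :
    pw x (a + b) = pw x a * pw x b := by
  induction a, ha using Nat.le_induction with
  | base => rw [add_comm, pw_succ x hb, pw_one]
  | succ a ha ih => rw [add_right_comm, pw_succ x (by omega), ih, pw_succ x ha, mul_assoc]

lemma zero_pw [MulZeroClass R] : ∀ n, pw (0 : R) n = 0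
  | 0 | 1 => rfl
  | _ + 2 => zero_mul _

lemma pw_eq_zero_of_lt [SemigroupWithZero R] {x : R} {N j : ℕ} (hx : pw x (N + 1) = 0)
    (hj : N < j) : pw x j = 0 := by
  obtain rfl | hj := eq_or_lt_of_le (Nat.succ_le_of_lt hj)
  · exact hx
  · rw [← Nat.add_sub_cancel' hj.le, pw_add x (by omega) (by omega), hx, zero_mul]

end Pw

section Filtration

variable (F : Type*) {R : Type*} [CommSemiring F] [NonUnitalRing R] [Module F R]

def powFiltration (x : R) (k : ℕ) : Submodule F R :=
  Submodule.span F (pw x '' Set.Ici k)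

variable {F} {x : R}

lemma powFiltration_antitone : Antitone (powFiltration F x) := fun _ _ h ↦
  Submodule.span_mono (Set.image_mono (Set.Ici_subset_Ici.2 h))

lemma pw_mem_powFiltration {j k : ℕ} (h : k ≤ j) : pw x j ∈ powFiltration F x k :=
  Submodule.subset_span ⟨j, h, rfl⟩

lemma mul_mem_powFiltration [SMulCommClass F R R] [IsScalarTower F R R] {a b : ℕ}
    (ha : 1 ≤ a) (hb : 1 ≤ b) {u v : R} (hu : u ∈ powFiltration F x a)
    (hv : v ∈ powFiltration F x b) : u * v ∈ powFiltration F x (a + b) := by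
  have hmem := Submodule.apply_mem_map₂ (LinearMap.mul F R) hu hv
  rw [powFiltration, powFiltration, Submodule.map₂_span_span] at hmem
  refine Submodule.span_le.2 ?_ hmem
  rintro _ ⟨_, ⟨i, hi, rfl⟩, _, ⟨j, hj, rfl⟩, rfl⟩
  change pw x i * pw x j ∈ _
  rw [← pw_add x (ha.trans hi) (hb.trans hj)]
  exact pw_mem_powFiltration (add_le_add hi hj)

lemma eq_zero_of_mem_powFiltration {N k : ℕ} (hx : pw x (N + 1) = 0) (hk : N < k) {v : R}
    (hv : v ∈ powFiltration F x k) : v = 0 := by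
  have hbot : powFiltration F x k ≤ ⊥ := by
    refine Submodule.span_le.2 ?_
    rintro _ ⟨j, hj, rfl⟩
    simp [pw_eq_zero_of_lt hx (hk.trans_le hj)]
  simpa using hbot hv

def HasLeadingTerm (x u : R) (m : ℕ) (c : F) : Prop :=
  u - c • pw x m ∈ powFiltration F x (m + 1)

lemma HasLeadingTerm.mem_powFiltration {u : R} {m : ℕ} {c : F} (h : HasLeadingTerm x u m c) :
    u ∈ powFiltration F x m := by
  rw [← sub_add_cancel u (c • pw x m)]
  exact add_mem (powFiltration_antitone (Nat.le_succ m) h)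
    (Submodule.smul_mem _ _ (pw_mem_powFiltration le_rfl))

lemma HasLeadingTerm.eq_zero_of_lt {N : ℕ} (hx : pw x (N + 1) = 0) {u : R} {m : ℕ} {c : F}
    (h : HasLeadingTerm x u m c) (hm : N < m) : u = 0 := by
  have h' := eq_zero_of_mem_powFiltration hx (hm.trans (Nat.lt_succ_self m)) h
  rwa [pw_eq_zero_of_lt hx hm, smul_zero, sub_zero] at h'

lemma hasLeadingTerm_pw [SMulCommClass F R R] [IsScalarTower F R R] {u : R} {m : ℕ} {c : F}
    (hm : 1 ≤ m) (h : HasLeadingTerm x u m c) {n : ℕ} (hn : 1 ≤ n) :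
    HasLeadingTerm x (pw u n) (n * m) (c ^ n) := by
  induction n, hn using Nat.le_induction with
  | base => simpa [pw_one] using h
  | succ n hn ih =>
    have hnm : 1 ≤ n * m := Nat.mul_pos hn hm
    have key : pw u (n + 1) - c ^ (n + 1) • pw x ((n + 1) * m) =
        (u - c • pw x m) * pw u n + c • (pw x m * (pw u n - c ^ n • pw x (n * m))) := by
      rw [pw_succ u hn, Nat.succ_mul, add_comm (n * m), pw_add x hm hnm, sub_mul, mul_sub,
        smul_sub, smul_mul_assoc, mul_smul_comm, smul_smul, pow_succ, mul_comm (c ^ n) c]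
      abel
    rw [HasLeadingTerm, key, show (n + 1) * m + 1 = (m + 1) + n * m by rw [Nat.succ_mul]; omega]
    refine add_mem (mul_mem_powFiltration (by omega) hnm h ih.mem_powFiltration)
      (Submodule.smul_mem _ _ ?_)
    exact powFiltration_antitone (by omega)
      (mul_mem_powFiltration hm (by omega) (pw_mem_powFiltration le_rfl) ih)

end Filtration

section Basis

variable {F R : Type*} [CommRing F] [NonUnitalRing R] [Module F R] {x : R} {N : ℕ}
  {b : Module.Basis (Fin N) F R}

lemma repr_eq_zero_of_mem_powFiltration (hb : ∀ i : Fin N, b i = pw x ((i : ℕ) + 1))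
    (hx : pw x (N + 1) = 0) {k : ℕ} {v : R} (hv : v ∈ powFiltration F x k) {i : Fin N}
    (hi : (i : ℕ) + 1 < k) : b.repr v i = 0 := by
  refine (Submodule.span_le (p := LinearMap.ker (b.coord i))).2 ?_ hv
  rintro _ ⟨j, hj, rfl⟩
  rcases le_or_gt j N with hjN | hjN
  · obtain ⟨j, rfl⟩ : ∃ j', j = j' + 1 := ⟨j - 1, by simp at hj; omega⟩
    have hji : (⟨j, by omega⟩ : Fin N) ≠ i := Fin.ne_of_val_ne (show j ≠ i by simp at hj; omega)
    rw [SetLike.mem_coe, LinearMap.mem_ker, ← hb ⟨j, by omega⟩, b.coord_apply, b.repr_self,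
      Finsupp.single_eq_of_ne' hji]
  · simp [pw_eq_zero_of_lt hx hjN]

lemma mem_powFiltration_of_repr (hb : ∀ i : Fin N, b i = pw x ((i : ℕ) + 1)) {k : ℕ} {v : R}
    (h : ∀ i, b.repr v i ≠ 0 → k ≤ (i : ℕ) + 1) : v ∈ powFiltration F x k := by
  refine Submodule.span_le.2 ?_ (b.mem_span_repr_support v)
  rintro _ ⟨i, hi, rfl⟩
  rw [hb i]
  exact pw_mem_powFiltration (h i (Finsupp.mem_support_iff.1 hi))

lemma HasLeadingTerm.repr_eq (hb : ∀ i : Fin N, b i = pw x ((i : ℕ) + 1))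
    (hx : pw x (N + 1) = 0) {u : R} {i : Fin N} {c : F} (h : HasLeadingTerm x u (i + 1) c) :
    b.repr u i = c := by
  have h0 := repr_eq_zero_of_mem_powFiltration hb hx h (i := i) (by omega)
  rwa [← hb, map_sub, map_smul, b.repr_self, Finsupp.sub_apply, Finsupp.smul_apply,
    Finsupp.single_eq_same, smul_eq_mul, mul_one, sub_eq_zero] at h0

lemma exists_hasLeadingTerm (hb : ∀ i : Fin N, b i = pw x ((i : ℕ) + 1)) {u : R} (hu : u ≠ 0) :
    ∃ m : Fin N, b.repr u m ≠ 0 ∧ HasLeadingTerm x u (m + 1) (b.repr u m) := by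
  have hne : (b.repr u).support.Nonempty := by simpa using hu
  obtain ⟨m, hm, hmin⟩ := (b.repr u).support.exists_min_image id hne
  refine ⟨m, Finsupp.mem_support_iff.1 hm, mem_powFiltration_of_repr hb fun i hi ↦ ?_⟩
  rw [← hb, map_sub, map_smul, b.repr_self, Finsupp.sub_apply, Finsupp.smul_apply] at hi
  by_contra! hle
  rcases (Fin.le_iff_val_le_val.2 (by omega : (i : ℕ) ≤ m)).lt_or_eq with hlt | rfl
  · have hi0 : b.repr u i = 0 := by
      by_contra h0
      exact absurd (hmin i (Finsupp.mem_support_iff.2 h0)) (not_le.2 hlt)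
    simp [hi0, hlt.ne'] at hi
  · simp at hi

lemma exists_repr_pw_eq_pow [SMulCommClass F R R] [IsScalarTower F R R]
    (hb : ∀ i : Fin N, b i = pw x ((i : ℕ) + 1)) (hx : pw x (N + 1) = 0) {n : ℕ} (hn : 1 ≤ n)
    {r : R} (hr : pw r n ≠ 0) :
    ∃ m i : Fin N, b.repr r m ≠ 0 ∧ (i : ℕ) + 1 = n * ((m : ℕ) + 1) ∧
      b.repr (pw r n) i = b.repr r m ^ n := by
  have hr0 : r ≠ 0 := by
    rintro rfl
    exact hr (zero_pw n)
  obtain ⟨m, hm, hlead⟩ := exists_hasLeadingTerm hb hr0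
  have hpow := hasLeadingTerm_pw (Nat.succ_pos m) hlead hn
  have hpos : 1 ≤ n * ((m : ℕ) + 1) := Nat.mul_pos hn (Nat.succ_pos m)
  have hle : n * ((m : ℕ) + 1) ≤ N := by
    by_contra! hlt
    exact hr (hpow.eq_zero_of_lt hx hlt)
  obtain ⟨k, hk⟩ : ∃ k, k + 1 = n * ((m : ℕ) + 1) := ⟨_, Nat.sub_add_cancel hpos⟩
  rw [← hk] at hpow
  exact ⟨m, ⟨k, by omega⟩, hm, hk, hpow.repr_eq hb hx (i := ⟨k, _⟩)⟩

end Basis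

lemma finrank_le_card_of_exists_repr_ne_zero {F M ι : Type*} [DivisionRing F] [AddCommGroup M]
    [Module F M] (b : Module.Basis ι F M) (U : Submodule F M) (S : Finset ι)
    (h : ∀ u ∈ U, u ≠ 0 → ∃ i ∈ S, b.repr u i ≠ 0) : Module.finrank F U ≤ #S := by
  let φ : U →ₗ[F] (S → F) := LinearMap.pi fun i ↦ (b.coord i).comp U.subtype
  have hφ : Function.Injective φ := by
    refine (injective_iff_map_eq_zero φ).2 fun u hu ↦ ?_
    by_contra hu0
    obtain ⟨i, hiS, hi⟩ := h u u.2 (by simpa using hu0)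
    exact hi (congrFun hu ⟨i, hiS⟩)
  calc Module.finrank F U ≤ Module.finrank F (S → F) :=
        LinearMap.finrank_le_finrank_of_injective hφ
    _ = #S := by simp

lemma card_filter_fin_succ_le (N : ℕ) (P : ℕ → Prop) [DecidablePred P] :
    #{i : Fin N | P (i + 1)} ≤ #{j ∈ Ioc 0 N | P j} :=
  card_le_card_of_injOn (fun i ↦ (i : ℕ) + 1) (fun i hi ↦ by simp at hi ⊢; omega)
    fun _ _ _ _ h ↦ Fin.ext (by simpa using h)

lemma card_filter_mul_le_eq_div {n : ℕ} (hn : 0 < n) (N : ℕ) :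
    #{j ∈ Ioc 0 N | n * j ≤ N} = N / n := by
  rw [← Nat.sub_zero (N / n), ← Nat.card_Ioc 0 (N / n)]
  congr 1
  ext j
  have hjN : j * n ≤ N → j ≤ N := (Nat.le_mul_of_pos_right j hn).trans
  simp only [mem_filter, mem_Ioc, Nat.le_div_iff_mul_le hn, mul_comm n]
  tauto

theorem stmt_17_general {F R : Type*} [Field F] (n N : ℕ)
    [NonUnitalCommRing R] [Module F R] [SMulCommClass F R R] [IsScalarTower F R R]
    (x : R) (b : Module.Basis (Fin N) F R) (hb : ∀ i : Fin N, b i = pw x ((i : ℕ) + 1))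
    (hx : pw x (N + 1) = 0)
    (U : Submodule F R)
    (hU : (∀ u ∈ U, u ≠ 0 → pw u n ≠ 0) ∨ (∀ u ∈ U, ∃ r : R, pw r n = u)) :
    n * Module.finrank F U ≤ N := by
  rcases Nat.eq_zero_or_pos n with rfl | hn
  · simp
  rw [mul_comm, ← Nat.le_div_iff_mul_le hn]
  rcases hU with hU | hU
  · calc Module.finrank F U ≤ #{i : Fin N | n * (i + 1) ≤ N} := by
          refine finrank_le_card_of_exists_repr_ne_zero b U _ fun u hu hu0 ↦ ?_
          obtain ⟨m, i, hm, hi, -⟩ := exists_repr_pw_eq_pow hb hx hn (hU u hu hu0)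
          exact ⟨m, by simp [← hi], hm⟩
      _ ≤ #{j ∈ Ioc 0 N | n * j ≤ N} := card_filter_fin_succ_le N (n * · ≤ N)
      _ = N / n := card_filter_mul_le_eq_div hn N
  · calc Module.finrank F U ≤ #{i : Fin N | n ∣ i + 1} := by
          refine finrank_le_card_of_exists_repr_ne_zero b U _ fun u hu hu0 ↦ ?_
          obtain ⟨r, rfl⟩ := hU u hu
          obtain ⟨m, i, hm, hi, hcoef⟩ := exists_repr_pw_eq_pow hb hx hn hu0
          exact ⟨i, by simp [hi], hcoef ▸ pow_ne_zero n hm⟩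
      _ ≤ #{j ∈ Ioc 0 N | n ∣ j} := card_filter_fin_succ_le N (n ∣ ·)
      _ = N / n := Nat.Ioc_filter_dvd_card_eq_div N n

theorem stmt_17 {F R : Type*} [Field F] (p n N : ℕ) [CharP F p] (hchar : p = 0 ∨ ¬ p ∣ n)
    (hn : 1 ≤ n) (hN : n ≤ N)
    [NonUnitalCommRing R] [Module F R] [SMulCommClass F R R] [IsScalarTower F R R]
    (x : R) (b : Module.Basis (Fin N) F R) (hb : ∀ i : Fin N, b i = pw x ((i : ℕ) + 1))
    (hx : pw x (N + 1) = 0)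
    (U : Submodule F R)
    (hU : (∀ u ∈ U, u ≠ 0 → pw u n ≠ 0) ∨ (∀ u ∈ U, ∃ r : R, pw r n = u)) :
    n * Module.finrank F U ≤ N :=
  stmt_17_general n N x b hb hx U hU
end
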